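/- arXiv:2003.06265 — 2 statements merged into one kernel-verified Lean document; each statement's English description precedes it below -/
import Mathlib

section
/- Let A be a proper symmetric 3×3 advantage matrix with a₁₂ = a₂₁ = a, a₁₃ = a₃₁ = b, a₂₃ = a₃₂ = c, where a, b, c > 0, and let F : S₃ → S₃ be the associated Variational Learning dynamics. Then the interior fixed point p = (c/(a+b+c), b/(a+b+c), a/(a+b+c)) is asymptotically stable: there exists a relative neighbourhood U of p in S₃ such that for every q ∈ U the iterates Fⁿ(q) converge to p as n → ∞. Consequently, every proper symmetric three-grammar system admits a state of stable variation. -/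
open Finset Filter Topology

/-- The simplex `S₃` of probability vectors over three grammars. -/
def simplex3 : Set (Fin 3 → ℝ) :=
  {p | (∀ i, 0 ≤ p i) ∧ ∑ i, p i = 1}

/-- The penalty probability `c_i(p) = ∑_{j ≠ i} a_{ij} p_j`. -/
def penalty (A : Matrix (Fin 3) (Fin 3) ℝ) (p : Fin 3 → ℝ) (i : Fin 3) : ℝ :=
  ∑ j ∈ Finset.univ.filter (fun j => j ≠ i), A i j * p j

/-- The Variational Learning dynamics
`F_i(p) = ∏_{j ≠ i} c_j(p) / ∑_m ∏_{k ≠ m} c_k(p)`. -/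
noncomputable def VLdyn (A : Matrix (Fin 3) (Fin 3) ℝ) (p : Fin 3 → ℝ) (i : Fin 3) : ℝ :=
  (∏ j ∈ Finset.univ.filter (fun j => j ≠ i), penalty A p j) /
    (∑ m, ∏ k ∈ Finset.univ.filter (fun k => k ≠ m), penalty A p k)

/-- The vertex `v_i` of the simplex, i.e. the state of total dominance of grammar `G_i`. -/
def vertex (i : Fin 3) : Fin 3 → ℝ := fun j => if j = i then 1 else 0

/-! In the coordinates `w_i ∝ q_i / p_i`, i.e. `q = reweight ![c, b, a] w`, the penalties become
`c_i ∝ (1 - w_i) / p_i`, so the dynamics turns into `w ↦ normalize (1 / (1 - w_i))`, which does not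
depend on `a, b, c` and fixes the barycentre. Near the barycentre this map shrinks every difference
`|w_i - w_j|` by the factor `36 / 49`, so its iterates converge to the barycentre, and those of
the Variational Learning dynamics to `p`. -/

section Normalization

variable {ι : Type*} [Fintype ι]

noncomputable def normalizeSum (v : ι → ℝ) : ι → ℝ := fun i => (∑ j, v j)⁻¹ * v i

noncomputable def reweight (u w : ι → ℝ) : ι → ℝ := normalizeSum (u * w)

lemma sum_normalizeSum {v : ι → ℝ} (hv : ∑ i, v i ≠ 0) : ∑ i, normalizeSum v i = 1 := by
  simp only [normalizeSum, ← Finset.mul_sum, inv_mul_cancel₀ hv]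

lemma normalizeSum_of_sum_eq_one {v : ι → ℝ} (hv : ∑ i, v i = 1) : normalizeSum v = v := by
  funext i
  simp [normalizeSum, hv]

lemma normalizeSum_const_mul {t : ℝ} (ht : t ≠ 0) (v : ι → ℝ) :
    normalizeSum (fun i => t * v i) = normalizeSum v := by
  funext i
  simp only [normalizeSum, ← Finset.mul_sum, mul_inv]
  rw [mul_mul_mul_comm, inv_mul_cancel₀ ht, one_mul]

lemma reweight_normalizeSum (u : ι → ℝ) {v : ι → ℝ} (hv : ∑ i, v i ≠ 0) :
    reweight u (normalizeSum v) = reweight u v := by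
  have hscale : u * normalizeSum v = fun i => (∑ j, v j)⁻¹ * (u * v) i := by
    funext i
    simp only [normalizeSum, Pi.mul_apply, mul_left_comm]
  rw [reweight, hscale, normalizeSum_const_mul (inv_ne_zero hv), reweight]

lemma reweight_inv_reweight {u w : ι → ℝ} (hu : ∀ i, u i ≠ 0) (huw : ∑ i, (u * w) i ≠ 0)
    (hw : ∑ i, w i = 1) : reweight u⁻¹ (reweight u w) = w := by
  have hcancel : u⁻¹ * (u * w) = w := funext fun i => inv_mul_cancel_left₀ (hu i) (w i)
  rw [show reweight u w = normalizeSum (u * w) from rfl, reweight_normalizeSum _ huw, reweight,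
    hcancel, normalizeSum_of_sum_eq_one hw]

lemma continuousAt_normalizeSum {v : ι → ℝ} (hv : ∑ i, v i ≠ 0) : ContinuousAt normalizeSum v :=
  continuousAt_pi.2 fun i =>
    ((continuous_finsetSum _ fun j _ => continuous_apply j).continuousAt.inv₀ hv).mul
      (continuous_apply i).continuousAt

lemma continuousAt_reweight (u : ι → ℝ) {w : ι → ℝ} (huw : ∑ i, (u * w) i ≠ 0) :
    ContinuousAt (reweight u) w :=
  (continuousAt_normalizeSum huw).comp (continuous_const.mul continuous_id).continuousAt

end Normalization

lemma pos_vec3 {x y z : ℝ} (hx : 0 < x) (hy : 0 < y) (hz : 0 < z) : ∀ i, 0 < ![x, y, z] i := by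
  intro i
  fin_cases i <;> assumption

lemma sum_mul_pos_of_mem_simplex3 {u q : Fin 3 → ℝ} (hu : ∀ i, 0 < u i) (hq : q ∈ simplex3) :
    0 < ∑ i, (u * q) i := by
  obtain ⟨i, -, hi⟩ := Finset.exists_lt_of_sum_lt (s := univ) (f := 0) (g := q) (by simp [hq.2])
  exact Finset.sum_pos' (fun j _ => mul_nonneg (hu j).le (hq.1 j))
    ⟨i, mem_univ i, mul_pos (hu i) hi⟩

lemma reweight_mem_simplex3 {u w : Fin 3 → ℝ} (hu : ∀ i, 0 < u i) (hw : w ∈ simplex3) :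
    reweight u w ∈ simplex3 := by
  have hsum := sum_mul_pos_of_mem_simplex3 hu hw
  exact ⟨fun i => mul_nonneg (inv_nonneg.2 hsum.le) (mul_nonneg (hu i).le (hw.1 i)),
    sum_normalizeSum hsum.ne'⟩


lemma penalty_const_mul (A : Matrix (Fin 3) (Fin 3) ℝ) (t : ℝ) (q : Fin 3 → ℝ) (i : Fin 3) :
    penalty A (fun j => t * q j) i = t * penalty A q i := by
  simp only [penalty, Finset.mul_sum, mul_left_comm]

lemma VLdyn_eq_normalizeSum_inv {A : Matrix (Fin 3) (Fin 3) ℝ} {q : Fin 3 → ℝ}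
    (h : ∀ i, penalty A q i ≠ 0) : VLdyn A q = normalizeSum fun i => (penalty A q i)⁻¹ := by
  have hprod : ∀ i, ∏ j ∈ univ.filter (· ≠ i), penalty A q j
      = (∏ j, penalty A q j) * (penalty A q i)⁻¹ := fun i => by
    rw [Finset.filter_ne', eq_mul_inv_iff_mul_eq₀ (h i), mul_comm,
      Finset.mul_prod_erase _ _ (mem_univ i)]
  have hP : ∏ j, penalty A q j ≠ 0 := Finset.prod_ne_zero_iff.2 fun j _ => h j
  funext i
  simp only [VLdyn, normalizeSum, hprod, ← Finset.mul_sum]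
  rw [mul_div_mul_left _ _ hP, div_eq_inv_mul]

noncomputable def reducedVL (w : Fin 3 → ℝ) : Fin 3 → ℝ :=
  normalizeSum fun i => (1 - w i)⁻¹

section Symmetric

variable {a b c : ℝ}

lemma penalty_symm (q : Fin 3 → ℝ) :
    penalty !![0, a, b; a, 0, c; b, c, 0] q
      = ![a * q 1 + b * q 2, a * q 0 + c * q 2, b * q 0 + c * q 1] := by
  funext i
  fin_cases i <;> simp [penalty, Finset.sum_filter, Fin.sum_univ_three]

lemma penalty_symm_mul {w : Fin 3 → ℝ} (hsum : ∑ i, w i = 1) (i : Fin 3) :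
    ![c, b, a] i * penalty !![0, a, b; a, 0, c; b, c, 0] (![c, b, a] * w) i
      = a * b * c * (1 - w i) := by
  rw [Fin.sum_univ_three] at hsum
  fin_cases i <;> simp [penalty_symm] <;> linear_combination (a * b * c) * hsum

lemma VLdyn_symm_reweight (ha : 0 < a) (hb : 0 < b) (hc : 0 < c) {w : Fin 3 → ℝ}
    (hw : w ∈ simplex3) (hw1 : ∀ i, w i < 1) :
    VLdyn !![0, a, b; a, 0, c; b, c, 0] (reweight ![c, b, a] w)
      = reweight ![c, b, a] (reducedVL w) := by
  have hn := pos_vec3 hc hb ha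
  set S := ∑ i, (![c, b, a] * w) i
  have hS : 0 < S := sum_mul_pos_of_mem_simplex3 hn hw
  have hpen : ∀ i, penalty !![0, a, b; a, 0, c; b, c, 0] (reweight ![c, b, a] w) i
      = S⁻¹ * (a * b * c * (1 - w i) / ![c, b, a] i) := fun i => by
    rw [show reweight ![c, b, a] w = fun j => S⁻¹ * (![c, b, a] * w) j from rfl,
      penalty_const_mul, ← penalty_symm_mul hw.2 i,
      mul_div_cancel_left₀ _ (hn i).ne']
  have hpos : ∀ i, 0 < S⁻¹ * (a * b * c * (1 - w i) / ![c, b, a] i) := fun i => by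
    have := hn i; have := hw1 i; positivity
  have hinv_sum : ∑ i, (1 - w i)⁻¹ ≠ 0 :=
    (Finset.sum_pos (fun i _ => inv_pos.2 (sub_pos.2 (hw1 i))) univ_nonempty).ne'
  rw [VLdyn_eq_normalizeSum_inv fun i => hpen i ▸ (hpos i).ne', reducedVL,
    reweight_normalizeSum _ hinv_sum]
  simp only [hpen]
  rw [reweight, ← normalizeSum_const_mul (div_ne_zero hS.ne' (by positivity : a * b * c ≠ 0))
    (![c, b, a] * fun i => (1 - w i)⁻¹)]
  congr 1
  funext i
  have := hn i; have := hw1 i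
  rw [Pi.mul_apply]
  field_simp

end Symmetric

lemma reducedVL_barycenter : reducedVL (fun _ => 1 / 3) = fun _ => 1 / 3 := by
  funext i
  norm_num [reducedVL, normalizeSum]

def nearBarycenter : Set (Fin 3 → ℝ) := {w | ∑ i, w i = 1 ∧ ∀ i j, |w i - w j| ≤ 1 / 8}

lemma barycenter_mem_nearBarycenter : (fun _ => 1 / 3 : Fin 3 → ℝ) ∈ nearBarycenter :=
  ⟨by norm_num, by norm_num⟩

lemma abs_sub_third_le {w : Fin 3 → ℝ} {ε : ℝ} (hsum : ∑ i, w i = 1)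
    (hw : ∀ i j, |w i - w j| ≤ ε) (i : Fin 3) : |w i - 1 / 3| ≤ 2 / 3 * ε := by
  rw [Fin.sum_univ_three] at hsum
  have h01 := abs_le.1 (hw 0 1)
  have h02 := abs_le.1 (hw 0 2)
  have h12 := abs_le.1 (hw 1 2)
  rw [abs_le]
  fin_cases i <;> constructor <;> simp <;> linarith

lemma mem_Icc_of_mem_nearBarycenter {w : Fin 3 → ℝ} (hw : w ∈ nearBarycenter) (i : Fin 3) :
    w i ∈ Set.Icc (1 / 4) (5 / 12) := by
  have := abs_le.1 (abs_sub_third_le hw.1 hw.2 i)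
  constructor <;> linarith

lemma nearBarycenter_subset_simplex3 : nearBarycenter ⊆ simplex3 :=
  fun w hw => ⟨fun i => by linarith [(mem_Icc_of_mem_nearBarycenter hw i).1], hw.1⟩

lemma lt_one_of_mem_nearBarycenter {w : Fin 3 → ℝ} (hw : w ∈ nearBarycenter) (i : Fin 3) :
    w i < 1 := by
  linarith [(mem_Icc_of_mem_nearBarycenter hw i).2]

-- `(1 - w_i)(1 - w_j) ≥ (7 / 12)²` and `∑ₖ (1 - w_k)⁻¹ ≥ 3 · 4 / 3`; `144 / (49 · 4) = 36 / 49`.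
lemma abs_reducedVL_sub_le {w : Fin 3 → ℝ} (hw : w ∈ nearBarycenter) (i j : Fin 3) :
    |reducedVL w i - reducedVL w j| ≤ 36 / 49 * |w i - w j| := by
  have hI := mem_Icc_of_mem_nearBarycenter hw
  have hi := hI i; have hj := hI j
  set S := ∑ k, (1 - w k)⁻¹
  have hterm : ∀ k, 4 / 3 ≤ (1 - w k)⁻¹ := fun k => by
    rw [le_inv_comm₀ (by norm_num) (by linarith [(hI k).2])]
    linarith [(hI k).1]
  have hS : 4 ≤ S := calc
    (4 : ℝ) = ∑ _k : Fin 3, 4 / 3 := by norm_num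
    _ ≤ S := Finset.sum_le_sum fun k _ => hterm k
  have hdiff : reducedVL w i - reducedVL w j = (w i - w j) / ((1 - w i) * (1 - w j) * S) := by
    have hH : ∀ k, reducedVL w k = S⁻¹ * (1 - w k)⁻¹ := fun k => rfl
    have : 1 - w i ≠ 0 := by linarith [hi.2]
    have : 1 - w j ≠ 0 := by linarith [hj.2]
    have : S ≠ 0 := by linarith
    rw [hH, hH]
    field_simp
    ring
  have hden : 49 / 36 ≤ (1 - w i) * (1 - w j) * S := by
    have : 49 / 144 ≤ (1 - w i) * (1 - w j) := by nlinarith [hi.2, hj.2]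
    nlinarith
  rw [hdiff, abs_div, abs_of_pos (show 0 < (1 - w i) * (1 - w j) * S by linarith),
    div_le_iff₀ (by linarith)]
  nlinarith [abs_nonneg (w i - w j)]

lemma mapsTo_reducedVL : Set.MapsTo reducedVL nearBarycenter nearBarycenter := by
  intro w hw
  refine ⟨sum_normalizeSum (Finset.sum_pos (fun i _ => ?_) univ_nonempty).ne', fun i j => ?_⟩
  · exact inv_pos.2 (by linarith [(mem_Icc_of_mem_nearBarycenter hw i).2])
  · nlinarith [abs_reducedVL_sub_le hw i j, hw.2 i j, abs_nonneg (w i - w j)]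

lemma abs_iterate_reducedVL_sub_le {w : Fin 3 → ℝ} (hw : w ∈ nearBarycenter) (n : ℕ)
    (i j : Fin 3) : |reducedVL^[n] w i - reducedVL^[n] w j| ≤ (36 / 49) ^ n / 8 := by
  induction n with
  | zero => simpa using hw.2 i j
  | succ n ih =>
    rw [Function.iterate_succ_apply', pow_succ]
    calc _ ≤ 36 / 49 * |reducedVL^[n] w i - reducedVL^[n] w j| :=
          abs_reducedVL_sub_le (mapsTo_reducedVL.iterate n hw) i j
      _ ≤ (36 / 49) ^ n * (36 / 49) / 8 := by linarith

lemma tendsto_iterate_reducedVL {w : Fin 3 → ℝ} (hw : w ∈ nearBarycenter) :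
    Tendsto (fun n => reducedVL^[n] w) atTop (𝓝 fun _ => 1 / 3) := by
  have hlim : Tendsto (fun n : ℕ => 2 / 3 * ((36 / 49 : ℝ) ^ n / 8)) atTop (𝓝 0) := by
    simpa using ((tendsto_pow_atTop_nhds_zero_of_lt_one (r := (36 / 49 : ℝ)) (by norm_num)
      (by norm_num)).div_const 8).const_mul (2 / 3)
  refine tendsto_pi_nhds.2 fun i =>
    tendsto_sub_nhds_zero_iff.1 (squeeze_zero_norm (fun n => ?_) hlim)
  exact abs_sub_third_le (mapsTo_reducedVL.iterate n hw).1
    (abs_iterate_reducedVL_sub_le hw n) i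

lemma mem_nearBarycenter_of_mem_ball {w : Fin 3 → ℝ} (hsum : ∑ i, w i = 1)
    (hw : w ∈ Metric.ball (fun _ => 1 / 3) (1 / 16)) : w ∈ nearBarycenter := by
  refine ⟨hsum, fun i j => ?_⟩
  have hi := (dist_le_pi_dist w (fun _ => 1 / 3) i).trans_lt hw
  have hj := (dist_le_pi_dist w (fun _ => 1 / 3) j).trans_lt hw
  rw [Real.dist_eq] at hi hj
  calc |w i - w j| ≤ |w i - 1 / 3| + |1 / 3 - w j| := abs_sub_le _ _ _
    _ ≤ 1 / 8 := by rw [abs_sub_comm (1 / 3)]; linarith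

lemma iterate_VLdyn_symm_reweight {a b c : ℝ} (ha : 0 < a) (hb : 0 < b) (hc : 0 < c)
    {w : Fin 3 → ℝ} (hw : w ∈ nearBarycenter) (n : ℕ) :
    (VLdyn !![0, a, b; a, 0, c; b, c, 0])^[n] (reweight ![c, b, a] w)
      = reweight ![c, b, a] (reducedVL^[n] w) := by
  induction n with
  | zero => rfl
  | succ n ih =>
    have hwn := mapsTo_reducedVL.iterate n hw
    rw [Function.iterate_succ_apply', ih, Function.iterate_succ_apply',
      VLdyn_symm_reweight ha hb hc (nearBarycenter_subset_simplex3 hwn)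
        (lt_one_of_mem_nearBarycenter hwn)]

lemma symm_fixedPoint_eq_reweight {a b c : ℝ} (ha : 0 < a) (hb : 0 < b) (hc : 0 < c) :
    ![c/(a+b+c), b/(a+b+c), a/(a+b+c)] = reweight ![c, b, a] fun _ => 1 / 3 := by
  funext i
  fin_cases i <;> simp [reweight, normalizeSum, Fin.sum_univ_three] <;> field_simp <;> ring

lemma exists_mem_nhdsWithin_tendsto_iterate_VLdyn_symm {a b c : ℝ}
    (ha : 0 < a) (hb : 0 < b) (hc : 0 < c) :
    ∃ U ∈ 𝓝[simplex3] (reweight ![c, b, a] fun _ => 1 / 3), ∀ q ∈ U,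
      Tendsto (fun n => (VLdyn !![0, a, b; a, 0, c; b, c, 0])^[n] q) atTop
        (𝓝 (reweight ![c, b, a] fun _ => 1 / 3)) := by
  have hn := pos_vec3 hc hb ha
  have hninv : ∀ i, 0 < (![c, b, a])⁻¹ i := fun i => inv_pos.2 (hn i)
  have hbary := nearBarycenter_subset_simplex3 barycenter_mem_nearBarycenter
  have hp := reweight_mem_simplex3 hn hbary
  refine ⟨simplex3 ∩ reweight (![c, b, a])⁻¹ ⁻¹' Metric.ball (fun _ => 1 / 3) (1 / 16),
    inter_mem_nhdsWithin _ ?_, ?_⟩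
  · refine (continuousAt_reweight _
      (sum_mul_pos_of_mem_simplex3 hninv hp).ne').preimage_mem_nhds ?_
    rw [reweight_inv_reweight (fun i => (hn i).ne') (sum_mul_pos_of_mem_simplex3 hn hbary).ne'
      hbary.2]
    exact Metric.ball_mem_nhds _ (by norm_num)
  · rintro q ⟨hq, hball⟩
    have hsum := sum_mul_pos_of_mem_simplex3 hninv hq
    have hw : reweight (![c, b, a])⁻¹ q ∈ nearBarycenter :=
      mem_nearBarycenter_of_mem_ball (sum_normalizeSum hsum.ne') hball
    have hq_eq : reweight ![c, b, a] (reweight (![c, b, a])⁻¹ q) = q := by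
      simpa using reweight_inv_reweight (fun i => (hninv i).ne') hsum.ne' hq.2
    rw [← hq_eq]
    simp_rw [iterate_VLdyn_symm_reweight ha hb hc hw]
    exact (continuousAt_reweight _ (sum_mul_pos_of_mem_simplex3 hn hbary).ne').tendsto.comp
      (tendsto_iterate_reducedVL hw)

theorem stmt_14 (a b c : ℝ) (ha : 0 < a) (hb : 0 < b) (hc : 0 < c)
    (A : Matrix (Fin 3) (Fin 3) ℝ)
    (hA : A = !![0, a, b; a, 0, c; b, c, 0]) :
    VLdyn A ![c/(a+b+c), b/(a+b+c), a/(a+b+c)] = ![c/(a+b+c), b/(a+b+c), a/(a+b+c)] ∧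
    (∃ U ∈ 𝓝[simplex3] (![c/(a+b+c), b/(a+b+c), a/(a+b+c)] : Fin 3 → ℝ), ∀ q ∈ U,
      Tendsto (fun n => (VLdyn A)^[n] q) atTop
        (𝓝 ![c/(a+b+c), b/(a+b+c), a/(a+b+c)])) ∧
    (∀ i, (![c/(a+b+c), b/(a+b+c), a/(a+b+c)] : Fin 3 → ℝ) i < 1) := by
  subst hA
  have hp := symm_fixedPoint_eq_reweight ha hb hc
  refine ⟨?_, hp ▸ exists_mem_nhdsWithin_tendsto_iterate_VLdyn_symm ha hb hc, fun i => ?_⟩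
  · rw [hp, VLdyn_symm_reweight ha hb hc
      (nearBarycenter_subset_simplex3 barycenter_mem_nearBarycenter) (fun _ => by norm_num),
      reducedVL_barycenter]
  · fin_cases i <;> simp <;> rw [div_lt_one (by positivity)] <;> linarith
end

section
/- Let A be a canonical quasi-Babelian 3×3 advantage matrix with parameters a, b > 0 (a₂₁ = a₃₁ = b and all other off-diagonal entries equal to a) and let F : S₃ → S₃ be the associated Variational Learning dynamics. Then for all values of a, b > 0, the vertex fixed points v₂ = (0,1,0) and v₃ = (0,0,1) are not asymptotically stable: for each of these vertices and every relative neighbourhood U of it in S₃, there exists q ∈ U whose iterates under F do not converge to that vertex. -/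
open Finset Filter Topology

/-!
For `{i, j, k} = {0, 1, 2}` the penalty `c_i`, which vanishes exactly at the vertex `v_i`,
satisfies `c_i(F p) = c_i(p) · R(p)` with `R = (a_{ij} c_k + a_{ik} c_j) / ∑_m ∏_{l ≠ m} c_l`,
because every `F_l` with `l ≠ i` carries the factor `c_i`. At `v_i` this factor equals
`a_{ij}/a_{ji} + a_{ik}/a_{ki}`, which for the vertices `v₂, v₃` of a quasi-Babelian matrix is
`1 + b/a > 1`. Hence near `v_i` the function `c_i` does not decrease along orbits, and an orbit
starting where `c_i > 0` cannot converge to `v_i`, where `c_i = 0`.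
-/

theorem not_tendsto_iterate_of_lyapunov {X : Type*} [TopologicalSpace X] {f : X → X}
    {S : Set X} {v q : X} {V : X → ℝ} (hf : Set.MapsTo f S S) (hV : ContinuousAt V v)
    (hVv : V v = 0) (hpos : ∀ p ∈ S, 0 < V p → 0 < V (f p))
    (hmono : ∀ᶠ p in 𝓝[S] v, V p ≤ V (f p)) (hqS : q ∈ S) (hVq : 0 < V q) :
    ¬ Tendsto (fun n => f^[n] q) atTop (𝓝 v) := by
  intro hconv
  have horbit : ∀ n, f^[n] q ∈ S := fun n => hf.iterate n hqS
  have horbit_pos : ∀ n, 0 < V (f^[n] q) := by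
    intro n
    induction n with
    | zero => exact hVq
    | succ n ih => rw [Function.iterate_succ_apply']; exact hpos _ (horbit n) ih
  have hconvS : Tendsto (fun n => f^[n] q) atTop (𝓝[S] v) :=
    tendsto_nhdsWithin_iff.2 ⟨hconv, Eventually.of_forall horbit⟩
  obtain ⟨N, hN⟩ := eventually_atTop.1 (hconvS.eventually hmono)
  have htail_mono : Monotone fun k => V (f^[k + N] q) := by
    refine monotone_nat_of_le_succ fun k => ?_
    rw [add_right_comm, Function.iterate_succ_apply']
    exact hN _ (Nat.le_add_left N k)
  have htail_lim : Tendsto (fun k => V (f^[k + N] q)) atTop (𝓝 0) := by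
    rw [← hVv]
    exact hV.tendsto.comp (hconv.comp (tendsto_add_atTop_nat N))
  have hle : V (f^[0 + N] q) ≤ 0 :=
    ge_of_tendsto htail_lim (Eventually.of_forall fun k => htail_mono (Nat.zero_le k))
  linarith [horbit_pos (0 + N)]

lemma simplex3_eq_stdSimplex : simplex3 = stdSimplex ℝ (Fin 3) := rfl

lemma vertex_eq_single (i : Fin 3) : vertex i = Pi.single i 1 := by
  funext j
  simp [vertex, Pi.single_apply]

lemma vertex_mem_simplex3 (i : Fin 3) : vertex i ∈ simplex3 := by
  rw [simplex3_eq_stdSimplex, vertex_eq_single]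
  exact single_mem_stdSimplex ℝ i

section Penalties

variable (A : Matrix (Fin 3) (Fin 3) ℝ) (p : Fin 3 → ℝ) {i j k : Fin 3}

def vlDenom : ℝ :=
  ∑ m, ∏ l ∈ univ.filter (fun l => l ≠ m), penalty A p l

noncomputable def penaltyGrowth (i j k : Fin 3) : ℝ :=
  (A i j * penalty A p k + A i k * penalty A p j) / vlDenom A p

@[fun_prop]
lemma continuous_penalty (i : Fin 3) : Continuous fun p => penalty A p i := by
  unfold penalty
  fun_prop

@[fun_prop]
lemma continuous_vlDenom : Continuous fun p => vlDenom A p := by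
  unfold vlDenom
  fun_prop

lemma filter_ne_eq_pair (hij : i ≠ j) (hik : i ≠ k) (hjk : j ≠ k) :
    univ.filter (fun l => l ≠ i) = {j, k} := by
  revert i j k
  decide

lemma univ_eq_triple (hij : i ≠ j) (hik : i ≠ k) (hjk : j ≠ k) :
    (univ : Finset (Fin 3)) = {i, j, k} := by
  revert i j k
  decide

lemma sum_univ_eq_triple (hij : i ≠ j) (hik : i ≠ k) (hjk : j ≠ k) (f : Fin 3 → ℝ) :
    ∑ m, f m = f i + f j + f k := by
  rw [univ_eq_triple hij hik hjk, sum_insert (by simp [hij, hik]), sum_pair hjk, add_assoc]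

lemma penalty_eq (hij : i ≠ j) (hik : i ≠ k) (hjk : j ≠ k) :
    penalty A p i = A i j * p j + A i k * p k := by
  rw [penalty, filter_ne_eq_pair hij hik hjk, sum_pair hjk]

lemma vlDenom_eq (hij : i ≠ j) (hik : i ≠ k) (hjk : j ≠ k) :
    vlDenom A p = penalty A p j * penalty A p k + penalty A p i * penalty A p k +
      penalty A p i * penalty A p j := by
  rw [vlDenom, sum_univ_eq_triple hij hik hjk, filter_ne_eq_pair hij hik hjk,
    filter_ne_eq_pair hij.symm hjk hik, filter_ne_eq_pair hik.symm hjk.symm hij,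
    prod_pair hjk, prod_pair hik, prod_pair hij]

lemma VLdyn_eq (hij : i ≠ j) (hik : i ≠ k) (hjk : j ≠ k) :
    VLdyn A p i = penalty A p j * penalty A p k / vlDenom A p := by
  rw [VLdyn, filter_ne_eq_pair hij hik hjk, prod_pair hjk]
  rfl

lemma penalty_VLdyn (hij : i ≠ j) (hik : i ≠ k) (hjk : j ≠ k) :
    penalty A (VLdyn A p) i = penalty A p i * penaltyGrowth A p i j k := by
  rw [penalty_eq A _ hij hik hjk, VLdyn_eq A p hij.symm hjk hik,
    VLdyn_eq A p hik.symm hjk.symm hij, penaltyGrowth]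
  ring

lemma penalty_vertex (i l : Fin 3) : penalty A (vertex i) l = if l = i then 0 else A l i := by
  by_cases h : l = i <;> simp [penalty, vertex, h, eq_comm]

lemma penalty_lineMap_vertex (hij : i ≠ j) (t : ℝ) :
    penalty A (AffineMap.lineMap (vertex i) (vertex j) t) i = t * A i j := by
  rw [penalty, sum_eq_single_of_mem j (by simpa using hij.symm)]
  · simp [vertex, AffineMap.lineMap_apply_module, hij.symm, mul_comm]
  · intro l hl hlj
    simp [vertex, AffineMap.lineMap_apply_module, (mem_filter.1 hl).2, hlj]

lemma penaltyGrowth_vertex (hij : i ≠ j) (hik : i ≠ k) (hjk : j ≠ k) (hji : A j i ≠ 0)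
    (hki : A k i ≠ 0) :
    penaltyGrowth A (vertex i) i j k = A i j / A j i + A i k / A k i := by
  rw [penaltyGrowth, vlDenom_eq A _ hij hik hjk]
  simp only [penalty_vertex, hij.symm, hik.symm, if_true, if_false]
  field_simp
  ring

end Penalties

section Positivity

variable {A : Matrix (Fin 3) (Fin 3) ℝ} {p : Fin 3 → ℝ} {i j k : Fin 3}

lemma penalty_nonneg (hA : ∀ i j, i ≠ j → 0 ≤ A i j) (hp : p ∈ simplex3) (i : Fin 3) :
    0 ≤ penalty A p i :=
  sum_nonneg fun j hj => mul_nonneg (hA i j (mem_filter.1 hj).2.symm) (hp.1 j)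

lemma penalty_add_pos (hA : ∀ i j, i ≠ j → 0 < A i j) (hp : p ∈ simplex3)
    (hij : i ≠ j) (hik : i ≠ k) (hjk : j ≠ k) : 0 < penalty A p j + penalty A p k := by
  have hsum : p i + p j + p k = 1 := by
    rw [← sum_univ_eq_triple hij hik hjk]
    exact hp.2
  have hcj : 0 ≤ penalty A p j := penalty_nonneg (fun i j h => (hA i j h).le) hp j
  have hck : 0 ≤ penalty A p k := penalty_nonneg (fun i j h => (hA i j h).le) hp k
  rw [penalty_eq A p hij.symm hjk hik] at hcj ⊢
  rw [penalty_eq A p hik.symm hjk.symm hij] at hck ⊢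
  have := hp.1 i; have := hp.1 j; have := hp.1 k
  have := hA j i hij.symm; have := hA j k hjk
  have := hA k i hik.symm; have := hA k j hjk.symm
  rcases (show 0 < p i ∨ 0 < p j ∨ 0 < p k by
    by_contra! h; linarith [h.1, h.2.1, h.2.2]) with h | h | h <;> nlinarith

lemma vlDenom_pos (hA : ∀ i j, i ≠ j → 0 < A i j) (hp : p ∈ simplex3) :
    0 < vlDenom A p := by
  have h01 : (0 : Fin 3) ≠ 1 := by decide
  have h02 : (0 : Fin 3) ≠ 2 := by decide
  have h12 : (1 : Fin 3) ≠ 2 := by decide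
  have h01_pos := penalty_add_pos hA hp h02.symm h12.symm h01
  have h02_pos := penalty_add_pos hA hp h01.symm h12 h02
  have h12_pos := penalty_add_pos hA hp h01 h02 h12
  have hc0 := penalty_nonneg (fun i j h => (hA i j h).le) hp 0
  have hc1 := penalty_nonneg (fun i j h => (hA i j h).le) hp 1
  have hc2 := penalty_nonneg (fun i j h => (hA i j h).le) hp 2
  rw [vlDenom_eq A p h01 h02 h12]
  rcases hc0.eq_or_lt with h0 | h0
  · rw [← h0] at h01_pos h02_pos ⊢
    nlinarith [mul_pos h01_pos h02_pos]
  · nlinarith [mul_pos h0 h12_pos, mul_nonneg hc1 hc2]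

lemma penaltyGrowth_pos (hA : ∀ i j, i ≠ j → 0 < A i j) (hp : p ∈ simplex3)
    (hij : i ≠ j) (hik : i ≠ k) (hjk : j ≠ k) : 0 < penaltyGrowth A p i j k := by
  have := penalty_add_pos hA hp hij hik hjk
  have := penalty_nonneg (fun i j h => (hA i j h).le) hp j
  have := penalty_nonneg (fun i j h => (hA i j h).le) hp k
  have := hA i j hij; have := hA i k hik
  refine div_pos ?_ (vlDenom_pos hA hp)
  rcases (show 0 < penalty A p j ∨ 0 < penalty A p k by
    by_contra! h; linarith [h.1, h.2]) with h | h <;> nlinarith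

lemma mapsTo_VLdyn (hA : ∀ i j, i ≠ j → 0 < A i j) :
    Set.MapsTo (VLdyn A) simplex3 simplex3 := by
  intro p hp
  have hD := vlDenom_pos hA hp
  refine ⟨fun i => div_nonneg (prod_nonneg fun l _ => ?_) hD.le, ?_⟩
  · exact penalty_nonneg (fun i j h => (hA i j h).le) hp l
  · simp only [VLdyn, ← sum_div]
    exact div_self hD.ne'

end Positivity

lemma frequently_penalty_pos (A : Matrix (Fin 3) (Fin 3) ℝ) {i j : Fin 3} (hij : i ≠ j)
    (hAij : 0 < A i j) : ∃ᶠ p in 𝓝[simplex3] (vertex i), 0 < penalty A p i := by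
  have hsegment : Tendsto (AffineMap.lineMap (vertex i) (vertex j) : ℝ → Fin 3 → ℝ) (𝓝[>] 0)
      (𝓝[simplex3] (vertex i)) := by
    refine tendsto_nhdsWithin_iff.2 ⟨?_, ?_⟩
    · have hcont := (AffineMap.lineMap_continuous (R := ℝ) (p := vertex i)
        (q := vertex j)).tendsto 0
      rw [AffineMap.lineMap_apply_zero] at hcont
      exact hcont.mono_left nhdsWithin_le_nhds
    · filter_upwards [Ioo_mem_nhdsGT one_pos] with t ht
      rw [simplex3_eq_stdSimplex]
      exact (convex_stdSimplex ℝ (Fin 3)).lineMap_mem (vertex_mem_simplex3 i)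
        (vertex_mem_simplex3 j) (Set.Ioo_subset_Icc_self ht)
  refine hsegment.frequently (Eventually.frequently ?_)
  filter_upwards [self_mem_nhdsWithin] with t (ht : 0 < t)
  rw [penalty_lineMap_vertex A hij]
  exact mul_pos ht hAij

theorem not_tendsto_VLdyn_vertex {A : Matrix (Fin 3) (Fin 3) ℝ}
    (hA : ∀ i j, i ≠ j → 0 < A i j) {i j k : Fin 3} (hij : i ≠ j) (hik : i ≠ k) (hjk : j ≠ k)
    (hunstable : 1 < A i j / A j i + A i k / A k i) :
    ∀ U ∈ 𝓝[simplex3] (vertex i), ∃ q ∈ U,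
      ¬ Tendsto (fun n => (VLdyn A)^[n] q) atTop (𝓝 (vertex i)) := by
  intro U hU
  obtain ⟨q, hq, hqU, hqS⟩ := ((frequently_penalty_pos A hij (hA i j hij)).and_eventually
    (inter_mem hU self_mem_nhdsWithin)).exists
  refine ⟨q, hqU, not_tendsto_iterate_of_lyapunov (mapsTo_VLdyn hA)
    (continuous_penalty A i).continuousAt (by simp [penalty_vertex]) ?_ ?_ hqS hq⟩
  · intro p hp hpos
    rw [penalty_VLdyn A p hij hik hjk]
    exact mul_pos hpos (penaltyGrowth_pos hA hp hij hik hjk)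
  · have hgrowth : ContinuousAt (fun p => penaltyGrowth A p i j k) (vertex i) :=
      ContinuousAt.div (by fun_prop) (by fun_prop) (vlDenom_pos hA (vertex_mem_simplex3 i)).ne'
    rw [← penaltyGrowth_vertex A hij hik hjk (hA j i hij.symm).ne' (hA k i hik.symm).ne']
      at hunstable
    filter_upwards [nhdsWithin_le_nhds (hgrowth.eventually (lt_mem_nhds hunstable)),
      self_mem_nhdsWithin] with p hgt hp
    rw [penalty_VLdyn A p hij hik hjk]
    exact le_mul_of_one_le_right (penalty_nonneg (fun i j h => (hA i j h).le) hp i) hgt.le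

theorem stmt_17 (a b : ℝ) (ha : 0 < a) (hb : 0 < b)
    (A : Matrix (Fin 3) (Fin 3) ℝ)
    (hA : A = !![0, a, a; b, 0, a; b, a, 0]) :
    ∀ i : Fin 3, i = 1 ∨ i = 2 → ∀ U ∈ 𝓝[simplex3] (vertex i), ∃ q ∈ U,
      ¬ Tendsto (fun n => (VLdyn A)^[n] q) atTop (𝓝 (vertex i)) := by
  subst hA
  have hproper : ∀ i j : Fin 3, i ≠ j → 0 < !![0, a, a; b, 0, a; b, a, 0] i j := by
    intro i j hij
    fin_cases i <;> fin_cases j <;> simp_all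
  have hunstable : 1 < a / a + b / a := by
    rw [div_self ha.ne']
    linarith [div_pos hb ha]
  rintro i (rfl | rfl)
  · exact not_tendsto_VLdyn_vertex hproper (j := 2) (k := 0) (by decide) (by decide)
      (by decide) (by simpa using hunstable)
  · exact not_tendsto_VLdyn_vertex hproper (j := 1) (k := 0) (by decide) (by decide)
      (by decide) (by simpa using hunstable)
end
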